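/- arXiv:2209.07369 — 2 statements merged into one kernel-verified Lean document; each statement's English description precedes it below -/
import Mathlib

section
/- Rado's Selection Principle: Let $I$ be an arbitrary index set and $\{X_i : i \in I\}$ a family of non-empty finite sets. For each finite subset $A \subseteq I$, let $f_A : A \to \bigcup_i X_i$ be a choice function with $f_A(i) \in X_i$ for each $i \in A$. Then there exists a function $f : I \to \bigcup_i X_i$ with $f(i) \in X_i$ for all $i$, such that for every finite subset $A \subseteq I$ there exists a finite set $B$ with $A \subseteq B \subseteq I$ and $f(i) = f_B(i)$ for each $i \in A$. -/
/-! Fix an ultrafilter `U` on `Finset I` refining `atTop`, so that `U`-almost every `B` contains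
any given finite set. For each `i`, the value `f B i` lies in the finite set `X i` for `U`-almost
every `B`, hence is `U`-almost surely constant, say equal to `g i`. Given a finite `A`, the finitely
many conditions `A ⊆ B` and `f B i = g i` for `i ∈ A` hold together for `U`-almost every `B`, and
any such `B` works. -/

open Filter

theorem Ultrafilter.exists_mem_eventually_eq_of_finite {β α : Type*} (U : Ultrafilter β)
    {φ : β → α} {s : Set α} (hs : s.Finite) (hφ : ∀ᶠ b in U, φ b ∈ s) :
    ∃ x ∈ s, ∀ᶠ b in U, φ b = x := by
  obtain ⟨x, hx, hUx⟩ := Ultrafilter.eq_pure_of_finite_mem hs (Ultrafilter.mem_map.2 hφ)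
  refine ⟨x, hx, Ultrafilter.mem_map.1 (?_ : {x} ∈ U.map φ)⟩
  rw [hUx]
  exact Ultrafilter.mem_pure.2 rfl

theorem exists_choice_eventually_eq_of_le_atTop {I α : Type*} (U : Ultrafilter (Finset I))
    (hU : ↑U ≤ (atTop : Filter (Finset I))) (X : I → Set α) (hX : ∀ i, (X i).Finite)
    (f : Finset I → I → α) (hf : ∀ A : Finset I, ∀ i ∈ A, f A i ∈ X i) :
    ∃ g : I → α, (∀ i, g i ∈ X i) ∧ ∀ i, ∀ᶠ B in U, f B i = g i := by
  have hmem : ∀ i, ∀ᶠ B in U, f B i ∈ X i := fun i =>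
    ((eventually_ge_atTop {i}).filter_mono hU).mono fun B hB => hf B i (Finset.singleton_subset_iff.1 hB)
  choose g hg hgU using fun i => U.exists_mem_eventually_eq_of_finite (hX i) (hmem i)
  exact ⟨g, hg, hgU⟩

theorem rado_selection_principle_general {I α : Type*} (X : I → Finset α)
    (f : Finset I → I → α)
    (hf : ∀ A : Finset I, ∀ i ∈ A, f A i ∈ X i) :
    ∃ g : I → α, (∀ i, g i ∈ X i) ∧
      ∀ A : Finset I, ∃ B : Finset I, A ⊆ B ∧ ∀ i ∈ A, g i = f B i := by
  let U : Ultrafilter (Finset I) := Ultrafilter.of atTop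
  have hU : ↑U ≤ (atTop : Filter (Finset I)) := Ultrafilter.of_le _
  obtain ⟨g, hg, hgU⟩ := exists_choice_eventually_eq_of_le_atTop U hU (fun i => (X i : Set α))
    (fun i => (X i).finite_toSet) f hf
  refine ⟨g, hg, fun A => ?_⟩
  have hA : ∀ᶠ B in U, A ⊆ B ∧ ∀ i ∈ A, f B i = g i :=
    ((eventually_ge_atTop A).filter_mono hU).and ((eventually_all_finset A).2 fun i _ => hgU i)
  obtain ⟨B, hAB, hB⟩ := hA.exists
  exact ⟨B, hAB, fun i hi => (hB i hi).symm⟩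

/-- **Rado's Selection Principle.** Given a family of non-empty finite sets `X i` indexed by
an arbitrary index set `I`, and for each finite subset `A ⊆ I` a choice function `f A` with
`f A i ∈ X i` for `i ∈ A`, there is a global choice function `g` with `g i ∈ X i` for all `i`,
such that every finite `A ⊆ I` is contained in a finite `B ⊆ I` with `g i = f B i` on `A`. -/
theorem rado_selection_principle {I α : Type*} (X : I → Finset α)
    (hX : ∀ i, (X i).Nonempty) (f : Finset I → I → α)
    (hf : ∀ A : Finset I, ∀ i ∈ A, f A i ∈ X i) :
    ∃ g : I → α, (∀ i, g i ∈ X i) ∧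
      ∀ A : Finset I, ∃ B : Finset I, A ⊆ B ∧ ∀ i ∈ A, g i = f B i :=
  rado_selection_principle_general X f hf
end

section
/- Let $\mathcal{O}$ be an orientation of the global one-inclusion graph $G_{\mathcal{H}}^{\mathcal{U}}=(V_n,E_n)$ and let $\mathbb{A}_{\mathcal{O}}$ be the induced learner (Algorithm 1). Then for every vertex $S = \{(x_1,y_1),\dots,(x_n,y_n)\} \in V_n$, the leave-one-out robust error satisfies $\frac{1}{n}\sum_{i=1}^n \mathbf{1}[\exists z \in \mathcal{U}(x_i): \mathbb{A}_{\mathcal{O}}(S\setminus\{(x_i,y_i)\})(z) \neq y_i] \leq \frac{\mathrm{adv\text{-}outdeg}(S;\mathcal{O})}{n}$. -/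
open scoped Classical

/-- A vertex of the global one-inclusion graph `G^𝒰_ℋ = (Vₙ, Eₙ)`: a multiset of `n` labeled
examples that is robustly realizable by `ℋ` w.r.t. `𝒰`. -/
def IsVertex {X : Type*} (H : Set (X → Bool)) (U : X → Set X) (n : ℕ)
    (v : Multiset (X × Bool)) : Prop :=
  Multiset.card v = n ∧ ∃ h ∈ H, ∀ p ∈ v, ∀ z ∈ U p.1, h z = p.2

/-- An edge of the global one-inclusion graph, labeled by a witness perturbation `z`. -/
def IsEdge {X : Type*} (H : Set (X → Bool)) (U : X → Set X) (n : ℕ)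
    (v u : Multiset (X × Bool)) (z : X) : Prop :=
  IsVertex H U n v ∧ IsVertex H U n u ∧
    ∃ x y x' y', y ≠ y' ∧ v - u = ({(x, y)} : Multiset (X × Bool)) ∧
      u - v = ({(x', y')} : Multiset (X × Bool)) ∧ z ∈ U x ∧ z ∈ U x'

/-- Adversarial out-degree of a vertex `v` under an orientation `O` of the global
one-inclusion graph: the number of elements `(x,y) ∈ v` witnessing an edge at `v` directed
away from `v`. -/
noncomputable def advOutdeg {X : Type*} (H : Set (X → Bool)) (U : X → Set X) (n : ℕ)
    (O : Multiset (X × Bool) × Multiset (X × Bool) × X → Multiset (X × Bool))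
    (v : Multiset (X × Bool)) : ℕ :=
  Multiset.card (v.filter fun p => ∃ u z,
    IsEdge H U n v u z ∧ p ∈ (v - u) + (u - v) ∧ O (v, u, z) = u)

/-- The condition, for the learner induced by an orientation `O` (Algorithm 1), that label
`y` wins on test instance `z` given training multiset `S'`: some vertex of `P_y` has all its
edges (labeled `z`) to vertices of `P_{-y}` directed toward it. -/
def GoodLabel {X : Type*} (H : Set (X → Bool)) (U : X → Set X) (n : ℕ)
    (O : Multiset (X × Bool) × Multiset (X × Bool) × X → Multiset (X × Bool))
    (S' : Multiset (X × Bool)) (z : X) (y : Bool) : Prop :=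
  ∃ x, z ∈ U x ∧ IsVertex H U n (S' + {(x, y)}) ∧
    ∀ x', z ∈ U x' → IsVertex H U n (S' + {(x', !y)}) →
      O (S' + {(x, y)}, S' + {(x', !y)}, z) = S' + {(x, y)}

/-- The learner `𝔸_𝒪` induced by an orientation `O` (Algorithm 1): on training multiset `S'`
and test instance `z`, output the label `y` such that some vertex of `P_y` has all its edges
labeled `z` to `P_{-y}` directed toward it, if such a label exists; otherwise default to
`+1` (here `true`). -/
noncomputable def inducedLearner {X : Type*} (H : Set (X → Bool)) (U : X → Set X) (n : ℕ)
    (O : Multiset (X × Bool) × Multiset (X × Bool) × X → Multiset (X × Bool))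
    (S' : Multiset (X × Bool)) (z : X) : Bool :=
  if GoodLabel H U n O S' z true then true
  else if GoodLabel H U n O S' z false then false
  else true

/-!
If `(xᵢ, yᵢ)` witnesses no outgoing edge of `S`, then for every `z ∈ U xᵢ` the vertex `S` itself
lies in `P_{yᵢ}` with all its `z`-edges to `P_{-yᵢ}` pointing into it, so `yᵢ` is a good label;
and `-yᵢ` is not, since a vertex of `P_{-yᵢ}` with all edges pointing into it would need the
edge to `S` oriented both ways. Hence the erroneous indices inject into those counted by
`advOutdeg`.
-/

def WitnessesOutEdge {X : Type*} (H : Set (X → Bool)) (U : X → Set X) (n : ℕ)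
    (O : Multiset (X × Bool) × Multiset (X × Bool) × X → Multiset (X × Bool))
    (v : Multiset (X × Bool)) (p : X × Bool) : Prop :=
  ∃ u z, IsEdge H U n v u z ∧ p ∈ (v - u) + (u - v) ∧ O (v, u, z) = u

def IsOrientation {X : Type*} (H : Set (X → Bool)) (U : X → Set X) (n : ℕ)
    (O : Multiset (X × Bool) × Multiset (X × Bool) × X → Multiset (X × Bool)) : Prop :=
  ∀ v u z, IsEdge H U n v u z → (O (v, u, z) = v ∨ O (v, u, z) = u) ∧ O (v, u, z) = O (u, v, z)

theorem Multiset.add_singleton_sub_add_singleton {α : Type*} [DecidableEq α]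
    (s : Multiset α) {a b : α} (h : a ≠ b) : (s + {a}) - (s + {b}) = {a} := by
  rw [add_tsub_add_eq_tsub_left, Multiset.sub_singleton,
    Multiset.erase_of_notMem (by simpa using h.symm)]

theorem Fin.card_filter_univ_eq_card_filter_ofFn {α : Type*} {n : ℕ} (e : Fin n → α)
    (p : α → Prop) [DecidablePred p] :
    (Finset.univ.filter fun i => p (e i)).card
      = Multiset.card ((↑(List.ofFn e) : Multiset α).filter p) := by
  rw [← Fin.univ_val_map, Multiset.filter_map, Multiset.card_map]
  rfl

section InducedLearner

variable {X : Type*} {H : Set (X → Bool)} {U : X → Set X} {n : ℕ}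
  {O : Multiset (X × Bool) × Multiset (X × Bool) × X → Multiset (X × Bool)}
  {S' : Multiset (X × Bool)} {x x' z : X} {y : Bool}

lemma advOutdeg_eq_card_filter (v : Multiset (X × Bool)) :
    advOutdeg H U n O v = Multiset.card (v.filter (WitnessesOutEdge H U n O v)) :=
  rfl

lemma isEdge_add_singleton {y' : Bool} (hv : IsVertex H U n (S' + {(x, y)}))
    (hu : IsVertex H U n (S' + {(x', y')})) (hy : y ≠ y') (hz : z ∈ U x) (hz' : z ∈ U x') :
    IsEdge H U n (S' + {(x, y)}) (S' + {(x', y')}) z :=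
  ⟨hv, hu, x, y, x', y', hy,
    S'.add_singleton_sub_add_singleton (by simp [hy]),
    S'.add_singleton_sub_add_singleton (by simp [hy.symm]), hz, hz'⟩

lemma IsOrientation.eq_self_of_not_witnessesOutEdge (hO : IsOrientation H U n O)
    (hS : IsVertex H U n (S' + {(x, y)}))
    (hno : ¬ WitnessesOutEdge H U n O (S' + {(x, y)}) (x, y)) (hz : z ∈ U x)
    (hz' : z ∈ U x') (hS' : IsVertex H U n (S' + {(x', !y)})) :
    O (S' + {(x, y)}, S' + {(x', !y)}, z) = S' + {(x, y)} := by
  have hedge := isEdge_add_singleton hS hS' (by simp) hz hz'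
  refine (hO _ _ _ hedge).1.resolve_right fun hout => hno ⟨_, z, hedge, ?_, hout⟩
  rw [S'.add_singleton_sub_add_singleton (by simp)]
  exact Multiset.mem_add.2 (Or.inl (Multiset.mem_singleton_self _))

lemma IsOrientation.goodLabel_of_not_witnessesOutEdge (hO : IsOrientation H U n O)
    (hS : IsVertex H U n (S' + {(x, y)}))
    (hno : ¬ WitnessesOutEdge H U n O (S' + {(x, y)}) (x, y)) (hz : z ∈ U x) :
    GoodLabel H U n O S' z y :=
  ⟨x, hz, hS, fun _ hz' hS' => hO.eq_self_of_not_witnessesOutEdge hS hno hz hz' hS'⟩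

lemma IsOrientation.not_goodLabel_not_of_not_witnessesOutEdge (hO : IsOrientation H U n O)
    (hS : IsVertex H U n (S' + {(x, y)}))
    (hno : ¬ WitnessesOutEdge H U n O (S' + {(x, y)}) (x, y)) (hz : z ∈ U x) :
    ¬ GoodLabel H U n O S' z (!y) := by
  rintro ⟨x', hz', hS', hall⟩
  have hin : O (S' + {(x, y)}, S' + {(x', !y)}, z) = S' + {(x, y)} :=
    hO.eq_self_of_not_witnessesOutEdge hS hno hz hz' hS'
  have hout : O (S' + {(x', !y)}, S' + {(x, y)}, z) = S' + {(x', !y)} := by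
    simpa using hall x hz (by simpa using hS)
  have hsymm := (hO _ _ _ (isEdge_add_singleton hS hS' (by simp) hz hz')).2
  rw [hin, hout] at hsymm
  simp at hsymm

lemma inducedLearner_eq_of_goodLabel (hy : GoodLabel H U n O S' z y)
    (hny : ¬ GoodLabel H U n O S' z (!y)) : inducedLearner H U n O S' z = y := by
  cases y
  · simp_all [inducedLearner]
  · simp [inducedLearner, hy]

lemma IsOrientation.inducedLearner_erase_eq_of_not_witnessesOutEdge
    (hO : IsOrientation H U n O) {v : Multiset (X × Bool)} {a : X × Bool}
    (hv : IsVertex H U n v) (ha : a ∈ v) (hno : ¬ WitnessesOutEdge H U n O v a)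
    (hz : z ∈ U a.1) : inducedLearner H U n O (v.erase a) z = a.2 := by
  have hv' : v.erase a + {(a.1, a.2)} = v := by
    rw [add_comm, Multiset.singleton_add, Multiset.cons_erase ha]
  rw [← hv'] at hv hno
  exact inducedLearner_eq_of_goodLabel (hO.goodLabel_of_not_witnessesOutEdge hv hno hz)
    (hO.not_goodLabel_not_of_not_witnessesOutEdge hv hno hz)

end InducedLearner

/-- **Leave-one-out robust error of the induced learner.** Let `O` be an orientation of the
global one-inclusion graph (directing each edge to one of its endpoints, independently of the
order in which the endpoints are listed). For every vertex `S = {(x₁,y₁),…,(xₙ,yₙ)}`, the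
average leave-one-out robust error of `𝔸_𝒪` is at most `advoutdeg(S; 𝒪)/n`. -/
theorem leave_one_out_error_le_advOutdeg {X : Type*} (H : Set (X → Bool)) (U : X → Set X)
    (n : ℕ)
    (O : Multiset (X × Bool) × Multiset (X × Bool) × X → Multiset (X × Bool))
    (hO : ∀ v u z, IsEdge H U n v u z →
      (O (v, u, z) = v ∨ O (v, u, z) = u) ∧ O (v, u, z) = O (u, v, z))
    (e : Fin n → X × Bool)
    (hv : IsVertex H U n (↑(List.ofFn e) : Multiset (X × Bool))) :
    ((Finset.univ.filter fun i : Fin n => ∃ z ∈ U (e i).1,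
        inducedLearner H U n O ((↑(List.ofFn e) : Multiset (X × Bool)).erase (e i)) z
          ≠ (e i).2).card : ℝ) / n
      ≤ (advOutdeg H U n O (↑(List.ofFn e) : Multiset (X × Bool)) : ℝ) / n := by
  set v : Multiset (X × Bool) := ↑(List.ofFn e)
  have herrors_sub : (Finset.univ.filter fun i : Fin n => ∃ z ∈ U (e i).1,
        inducedLearner H U n O (v.erase (e i)) z ≠ (e i).2)
      ⊆ Finset.univ.filter fun i => WitnessesOutEdge H U n O v (e i) := by
    intro i
    simp only [Finset.mem_filter, Finset.mem_univ, true_and]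
    rintro ⟨z, hz, herr⟩
    by_contra hno
    exact herr (IsOrientation.inducedLearner_erase_eq_of_not_witnessesOutEdge hO hv
      (List.mem_ofFn.2 ⟨i, rfl⟩) hno hz)
  have hcount := (Finset.card_le_card herrors_sub).trans_eq
    (Fin.card_filter_univ_eq_card_filter_ofFn e (WitnessesOutEdge H U n O v))
  rw [← advOutdeg_eq_card_filter] at hcount
  gcongr
end
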